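/- arXiv:math/0304057 — 2 statements merged into one kernel-verified Lean document; each statement's English description precedes it below -/
import Mathlib

section
/- The commutator subgroup [G,G] of the group G equals the subgroup generated by g₂² = (0,0,2,0) and g₃² = (0,0,0,2); explicitly, [G,G] = {(0,0,c,d) : c and d are even integers}. -/
/-- The underlying set of the group `G` is `ℤ⁴`. -/
def G : Type := ℤ × ℤ × ℤ × ℤ

namespace G

/-- Build an element of `G` from four integers. -/
def mk (a b c d : ℤ) : G := (a, b, c, d)

/-- The twisted multiplication
`(a,b,c,d)·(a',b',c',d') = (a+a', b+b', c+(−1)^a·c', d+(−1)^a·d')`. -/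
def mul' (x y : G) : G :=
  mk (x.1 + y.1) (x.2.1 + y.2.1)
    (x.2.2.1 + (x.1.negOnePow : ℤ) * y.2.2.1)
    (x.2.2.2 + (x.1.negOnePow : ℤ) * y.2.2.2)

/-- The inverse `(a,b,c,d)⁻¹ = (−a, −b, −(−1)^a·c, −(−1)^a·d)`. -/
def inv' (x : G) : G :=
  mk (-x.1) (-x.2.1) (-((x.1.negOnePow : ℤ) * x.2.2.1)) (-((x.1.negOnePow : ℤ) * x.2.2.2))

instance instGroup : Group G where
  mul := mul'
  one := mk 0 0 0 0
  inv := inv'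
  mul_assoc x y z := by
    show mul' (mul' x y) z = mul' x (mul' y z)
    obtain ⟨a, b, c, d⟩ := x
    obtain ⟨a', b', c', d'⟩ := y
    obtain ⟨a'', b'', c'', d''⟩ := z
    simp only [mul', mk, Int.negOnePow_add, Units.val_mul]
    exact Prod.ext (by ring) (Prod.ext (by ring) (Prod.ext (by ring) (by ring)))
  one_mul x := by
    show mul' (mk 0 0 0 0) x = x
    obtain ⟨a, b, c, d⟩ := x
    simp [mul', mk]
    rfl
  mul_one x := by
    show mul' x (mk 0 0 0 0) = x
    obtain ⟨a, b, c, d⟩ := x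
    simp [mul', mk]
    rfl
  inv_mul_cancel x := by
    show mul' (inv' x) x = mk 0 0 0 0
    obtain ⟨a, b, c, d⟩ := x
    simp only [mul', inv', mk, Int.negOnePow_neg]
    exact Prod.ext (by ring) (Prod.ext (by ring) (Prod.ext (by ring) (by ring)))

def g₀ : G := mk 1 0 0 0
def g₁ : G := mk 0 1 0 0
def g₂ : G := mk 0 0 1 0
def g₃ : G := mk 0 0 0 1

/-!
A commutator `⁅(a,b,c,d), (a',b',c',d')⁆` is `(0, 0, c(1 - (-1)^a') - c'(1 - (-1)^a), …)`,
and `1 - (-1)^n ∈ {0, 2}`, so `[G,G]` lies in the lattice of `(0,0,c,d)` with `c, d` even.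
Conversely `⁅g₂, g₀⁆ = g₂²` and `⁅g₃, g₀⁆ = g₃²`, and these two squares generate that lattice.
-/

open scoped commutatorElement

lemma mk_mul_mk (a b c d a' b' c' d' : ℤ) :
    mk a b c d * mk a' b' c' d' =
      mk (a + a') (b + b') (c + (a.negOnePow : ℤ) * c') (d + (a.negOnePow : ℤ) * d') :=
  rfl

lemma inv_mk (a b c d : ℤ) :
    (mk a b c d)⁻¹ = mk (-a) (-b) (-((a.negOnePow : ℤ) * c)) (-((a.negOnePow : ℤ) * d)) :=
  rfl

lemma one_eq_mk : (1 : G) = mk 0 0 0 0 := rfl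

lemma eq_mk (x : G) : x = mk x.1 x.2.1 x.2.2.1 x.2.2.2 := rfl

lemma mk_zero_zero_mul_mk (c d c' d' : ℤ) :
    mk 0 0 c d * mk 0 0 c' d' = mk 0 0 (c + c') (d + d') := by
  simp [mk_mul_mk]

lemma inv_mk_zero_zero (c d : ℤ) : (mk 0 0 c d)⁻¹ = mk 0 0 (-c) (-d) := by
  simp [inv_mk]

lemma mk_zero_zero_zpow (c d n : ℤ) : mk 0 0 c d ^ n = mk 0 0 (n * c) (n * d) := by
  induction n using Int.induction_on with
  | zero => simp [one_eq_mk]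
  | succ k ih =>
    rw [zpow_add_one, ih, mk_zero_zero_mul_mk]
    congr 1 <;> ring
  | pred k ih =>
    rw [zpow_sub_one, ih, inv_mk_zero_zero, mk_zero_zero_mul_mk]
    congr 1 <;> ring

lemma commutatorElement_mk (a b c d a' b' c' d' : ℤ) :
    ⁅mk a b c d, mk a' b' c' d'⁆ =
      mk 0 0 (c * (1 - (a'.negOnePow : ℤ)) - c' * (1 - (a.negOnePow : ℤ)))
        (d * (1 - (a'.negOnePow : ℤ)) - d' * (1 - (a.negOnePow : ℤ))) := by
  have hsq (n : ℤ) : (n.negOnePow : ℤ) * n.negOnePow = 1 := by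
    rw [← Units.val_mul, Int.units_mul_self, Units.val_one]
  simp only [commutatorElement_def, mk_mul_mk, inv_mk, Int.negOnePow_add, Int.negOnePow_neg,
    Units.val_mul]
  have ha := hsq a
  have ha' := hsq a'
  generalize (a.negOnePow : ℤ) = e at ha ⊢
  generalize (a'.negOnePow : ℤ) = e' at ha' ⊢
  congr 1
  · ring
  · ring
  · linear_combination (-e' * c - e' * e' * c') * ha + (-c') * ha'
  · linear_combination (-e' * d - e' * e' * d') * ha + (-d') * ha'

lemma even_one_sub_negOnePow (n : ℤ) : Even (1 - (n.negOnePow : ℤ)) := by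
  rcases Int.even_or_odd n with h | h
  · simp [Int.negOnePow_even _ h]
  · rw [Int.negOnePow_odd _ h]; decide

def evenLattice : Subgroup G where
  carrier := {x | x.1 = 0 ∧ x.2.1 = 0 ∧ Even x.2.2.1 ∧ Even x.2.2.2}
  one_mem' := ⟨rfl, rfl, .zero, .zero⟩
  mul_mem' := by
    rintro x y ⟨hx₁, hx₂, hc, hd⟩ ⟨hy₁, hy₂, hc', hd'⟩
    rw [eq_mk x, eq_mk y, hx₁, hx₂, hy₁, hy₂, mk_zero_zero_mul_mk]
    exact ⟨rfl, rfl, hc.add hc', hd.add hd'⟩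
  inv_mem' := by
    rintro x ⟨hx₁, hx₂, hc, hd⟩
    rw [eq_mk x, hx₁, hx₂, inv_mk_zero_zero]
    exact ⟨rfl, rfl, hc.neg, hd.neg⟩

lemma g₂_sq : g₂ ^ 2 = mk 0 0 2 0 := by
  rw [sq]; exact mk_zero_zero_mul_mk 1 0 1 0

lemma g₃_sq : g₃ ^ 2 = mk 0 0 0 2 := by
  rw [sq]; exact mk_zero_zero_mul_mk 0 1 0 1

lemma commutatorElement_g₂_g₀ : ⁅g₂, g₀⁆ = g₂ ^ 2 := by
  rw [g₂_sq, g₂, g₀, commutatorElement_mk]; norm_num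

lemma commutatorElement_g₃_g₀ : ⁅g₃, g₀⁆ = g₃ ^ 2 := by
  rw [g₃_sq, g₃, g₀, commutatorElement_mk]; norm_num

lemma commutator_le_evenLattice : commutator G ≤ evenLattice := by
  rw [commutator_def, Subgroup.commutator_le]
  intro x _ y _
  have hc := even_one_sub_negOnePow x.1
  have hc' := even_one_sub_negOnePow y.1
  rw [eq_mk x, eq_mk y, commutatorElement_mk]
  exact ⟨rfl, rfl, (hc'.mul_left _).sub (hc.mul_left _), (hc'.mul_left _).sub (hc.mul_left _)⟩

lemma evenLattice_le_closure_sq : evenLattice ≤ Subgroup.closure {g₂ ^ 2, g₃ ^ 2} := by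
  rintro x ⟨hx₁, hx₂, ⟨m, hm⟩, ⟨n, hn⟩⟩
  have hx : x = (g₂ ^ 2) ^ m * (g₃ ^ 2) ^ n := by
    rw [g₂_sq, g₃_sq, mk_zero_zero_zpow, mk_zero_zero_zpow, mk_zero_zero_mul_mk, eq_mk x, hx₁,
      hx₂, hm, hn]
    congr 1 <;> ring
  rw [hx]
  exact mul_mem (zpow_mem (Subgroup.subset_closure (.inl rfl)) m)
    (zpow_mem (Subgroup.subset_closure (.inr rfl)) n)

lemma closure_sq_le_commutator : Subgroup.closure {g₂ ^ 2, g₃ ^ 2} ≤ commutator G := by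
  rw [Subgroup.closure_le, Set.insert_subset_iff, Set.singleton_subset_iff,
    ← commutatorElement_g₂_g₀, ← commutatorElement_g₃_g₀, commutator_def]
  exact ⟨Subgroup.commutator_mem_commutator trivial trivial,
    Subgroup.commutator_mem_commutator trivial trivial⟩

end G

open G in
/-- The commutator subgroup `[G,G]` equals the subgroup generated by
`g₂² = (0,0,2,0)` and `g₃² = (0,0,0,2)`; explicitly
`[G,G] = {(0,0,c,d) : c and d even}`. -/
theorem G_commutator_eq :
    g₂ ^ 2 = mk 0 0 2 0 ∧ g₃ ^ 2 = mk 0 0 0 2 ∧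
    commutator G = Subgroup.closure ({g₂ ^ 2, g₃ ^ 2} : Set G) ∧
    (commutator G : Set G) =
      {x : G | x.1 = 0 ∧ x.2.1 = 0 ∧ Even x.2.2.1 ∧ Even x.2.2.2} := by
  have h₁ := commutator_le_evenLattice
  have h₂ := evenLattice_le_closure_sq
  have h₃ := closure_sq_le_commutator
  exact ⟨g₂_sq, g₃_sq, le_antisymm (h₁.trans h₂) h₃,
    congrArg SetLike.coe (le_antisymm h₁ (h₂.trans h₃))⟩
end

section
/- If T is a topological space and τ : T → Hom(G, U(1)) is a family of group homomorphisms such that for every g ∈ G the map t ↦ τ(t)(g) is continuous, then the maps t ↦ τ(t)(g₂) and t ↦ τ(t)(g₃) are locally constant on T. -/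
theorem MonoidHom.map_sq_eq_one_of_conj_eq_inv {H M : Type*} [Group H] [CommGroup M]
    (φ : H →* M) {x g : H} (h : x * g * x⁻¹ = g⁻¹) : φ g ^ 2 = 1 := by
  have hφ : φ x * φ g * (φ x)⁻¹ = (φ g)⁻¹ := by simpa only [map_mul, map_inv] using congrArg φ h
  rw [mul_inv_cancel_comm] at hφ
  rw [sq, mul_eq_one_iff_eq_inv, ← hφ]

theorem Circle.finite_setOf_pow_eq_one {n : ℕ} (hn : 0 < n) : {z : Circle | z ^ n = 1}.Finite := by
  have hℂ : {w : ℂ | w ^ n = 1}.Finite := by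
    refine (Polynomial.nthRoots n (1 : ℂ)).toFinset.finite_toSet.subset fun w hw => ?_
    simpa [Polynomial.mem_nthRoots hn] using hw
  refine .of_finite_image (f := ((↑) : Circle → ℂ)) (hℂ.subset ?_) Circle.coe_injective.injOn
  rintro _ ⟨z, hz, rfl⟩
  simpa using congrArg ((↑) : Circle → ℂ) (hz : z ^ n = 1)

theorem IsLocallyConstant.of_continuous_of_mem_finite {X Y : Type*} [TopologicalSpace X]
    [TopologicalSpace Y] [T1Space Y] {f : X → Y} {s : Set Y} (hf : Continuous f)
    (hs : s.Finite) (hfs : ∀ x, f x ∈ s) : IsLocallyConstant f := by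
  have : DiscreteTopology s := hs.isDiscrete.to_subtype
  have hlc : IsLocallyConstant (s.codRestrict f hfs) :=
    (IsLocallyConstant.iff_continuous _).2 (hf.codRestrict hfs)
  exact hlc.comp Subtype.val

theorem isLocallyConstant_circle_of_conj_eq_inv {T H : Type*} [TopologicalSpace T] [Group H]
    (τ : T → (H →* Circle)) {x g : H} (hcont : Continuous fun t => τ t g)
    (h : x * g * x⁻¹ = g⁻¹) : IsLocallyConstant fun t => τ t g :=
  .of_continuous_of_mem_finite hcont (Circle.finite_setOf_pow_eq_one two_pos)
    fun t => (τ t).map_sq_eq_one_of_conj_eq_inv h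

namespace G

theorem g₀_mul_g₂_mul_inv : g₀ * g₂ * g₀⁻¹ = g₂⁻¹ :=
  rfl

theorem g₀_mul_g₃_mul_inv : g₀ * g₃ * g₀⁻¹ = g₃⁻¹ :=
  rfl

end G

open G in
/-- In a continuous family of `U(1)`-representations of `G`, the images of `g₂` and `g₃`
are locally constant. -/
theorem G_circle_family_locally_constant {T : Type*} [TopologicalSpace T]
    (τ : T → (G →* Circle)) (hcont : ∀ g : G, Continuous fun t => τ t g) :
    IsLocallyConstant (fun t => τ t g₂) ∧ IsLocallyConstant (fun t => τ t g₃) :=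
  ⟨isLocallyConstant_circle_of_conj_eq_inv τ (hcont g₂) g₀_mul_g₂_mul_inv,
    isLocallyConstant_circle_of_conj_eq_inv τ (hcont g₃) g₀_mul_g₃_mul_inv⟩
end
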